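/- For every integer m > 2, the border rank of the tensor T_{BCLRS,m} is at least 3m − 2. -/

import Mathlib

/-- A simple (rank-one) tensor in coordinates: `(u ⊗ v ⊗ w)_{ijk} = u_i v_j w_k`. -/
def simpleTensor {ι₁ ι₂ ι₃ : Type} (u : ι₁ → ℂ) (v : ι₂ → ℂ) (w : ι₃ → ℂ) :
    ι₁ → ι₂ → ι₃ → ℂ :=
  fun i j k => u i * v j * w k

/-- The set of tensors of rank at most `r`: sums of `r` simple tensors. -/
def rankAtMost (ι₁ ι₂ ι₃ : Type) (r : ℕ) : Set (ι₁ → ι₂ → ι₃ → ℂ) :=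
  {T | ∃ u : Fin r → ι₁ → ℂ, ∃ v : Fin r → ι₂ → ℂ, ∃ w : Fin r → ι₃ → ℂ,
    T = ∑ s : Fin r, simpleTensor (u s) (v s) (w s)}

/-- The border rank of a tensor: the least `r` such that `T` lies in the closure of the
set of tensors of rank at most `r`. -/
noncomputable def borderRank {ι₁ ι₂ ι₃ : Type} (T : ι₁ → ι₂ → ι₃ → ℂ) : ℕ :=
  sInf {r : ℕ | T ∈ closure (rankAtMost ι₁ ι₂ ι₃ r)}

/-- The matrix multiplication tensor `M_{⟨n,m,p⟩} = ∑ x^i_j ⊗ y^j_k ⊗ z^k_i`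
in coordinates: the first factor is indexed by pairs `(i,j)`, the second by `(j,k)`,
the third by `(k,i)`. -/
def matMulTensor (n m p : ℕ) :
    (Fin n × Fin m) → (Fin m × Fin p) → (Fin p × Fin n) → ℂ :=
  fun x y z => if x.2 = y.1 ∧ y.2 = z.1 ∧ z.2 = x.1 then 1 else 0

/-- The BCLRS tensor `T_{BCLRS,m} = M_{⟨m,2,2⟩} − x^1_1 ⊗ (y^1_1 ⊗ z^1_1 + y^1_2 ⊗ z^2_1)`
(indices written 1-based in the literature, 0-based here). -/
def TBCLRS (m : ℕ) : (Fin m × Fin 2) → (Fin 2 × Fin 2) → (Fin 2 × Fin m) → ℂ :=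
  fun x y z =>
    matMulTensor m 2 2 x y z -
      (if x.1.val = 0 ∧ x.2.val = 0 then 1 else 0) *
        ((if y.1.val = 0 ∧ y.2.val = 0 then 1 else 0) *
            (if z.1.val = 0 ∧ z.2.val = 0 then 1 else 0) +
          (if y.1.val = 0 ∧ y.2.val = 1 then 1 else 0) *
            (if z.1.val = 1 ∧ z.2.val = 0 then 1 else 0))

/-!
Koszul flattening. Restrict the middle factor along `ℂ^{2×2} → ℂ³`, `y^j_k ↦ e_{j+k}`, and send
`T ∈ A ⊗ ℂ³ ⊗ C` to the map `A* ⊗ ℂ³ → Λ²ℂ³ ⊗ C` that wedges with the middle factor, where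
`Λ²ℂ³ ≅ ℂ³` via the cross product. On `a ⊗ b ⊗ c` this map is `a ⊗ (· × b) ⊗ c`, of rank at most 2
since `b × b = 0`; so it has rank at most `2r` on tensors of rank `≤ r` and, minors being
continuous, also on their closure. For `T_{BCLRS,m}` the slices `x^i_j` with `i ≠ 0` are those of
`M⟨m,2,2⟩` and give `m - 1` invertible diagonal `6 × 6` blocks; one more entry from the slice
`x^0_1` completes a block-triangular minor of size `6m - 5` with nonzero determinant. Hence
`2 R̲ ≥ 6m - 5`, i.e. `R̲ ≥ 3m - 2`.
-/

open Matrix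

namespace Matrix

variable {K m n : Type*} [Field K] [Fintype n]

theorem rank_add_le (A B : Matrix m n K) : (A + B).rank ≤ A.rank + B.rank := by
  unfold rank
  rw [mulVecLin_add]
  exact (Submodule.finrank_mono (LinearMap.range_add_le _ _)).trans
    (Submodule.finrank_add_le_finrank_add_finrank _ _)

theorem rank_sum_le {ι : Type*} (s : Finset ι) (A : ι → Matrix m n K) :
    (∑ i ∈ s, A i).rank ≤ ∑ i ∈ s, (A i).rank := by
  classical
  induction s using Finset.induction_on with
  | empty => simp [rank_zero]
  | insert i s hi ih =>
    rw [Finset.sum_insert hi, Finset.sum_insert hi]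
    exact (rank_add_le _ _).trans (Nat.add_le_add_left ih _)

theorem rank_diagonal_mul_submatrix_mul_diagonal_le {m' n' : Type*} [Fintype m] [Fintype n']
    (a : m → K) (B : Matrix m' n' K) (f : m → m') (g : n → n') (b : n → K) :
    (of fun i j => a i * B (f i) (g j) * b j).rank ≤ B.rank := by
  classical
  have : (of fun i j => a i * B (f i) (g j) * b j) = diagonal a * B.submatrix f g * diagonal b := by
    ext i j; simp
  rw [this]
  exact (rank_mul_le_left _ _).trans ((rank_mul_le_right _ _).trans (rank_submatrix_le _ _ _))

end Matrix

theorem rank_toMatrix'_crossProduct_flip_le (v : Fin 3 → ℂ) :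
    (LinearMap.toMatrix' (crossProduct.flip v)).rank ≤ 2 := by
  rw [rank, ← toLin'_apply', toLin'_toMatrix']
  have hsum := LinearMap.finrank_range_add_finrank_ker (crossProduct.flip v)
  rw [Module.finrank_fin_fun] at hsum
  by_cases hv : v = 0
  · rw [hv, map_zero, LinearMap.range_zero, finrank_bot]
    omega
  · have : 0 < Module.finrank ℂ (LinearMap.ker (crossProduct.flip v)) :=
      Module.finrank_pos_iff_exists_ne_zero.mpr ⟨⟨v, by simp [cross_self]⟩, by simpa using hv⟩
    omega

section BorderRank

variable {ι₁ ι₂ ι₃ : Type} [Fintype ι₁] [Fintype ι₂]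

theorem exists_mem_rankAtMost (T : ι₁ → ι₂ → ι₃ → ℂ) : ∃ r, T ∈ rankAtMost ι₁ ι₂ ι₃ r := by
  classical
  let e := (Fintype.equivFin (ι₁ × ι₂)).symm
  refine ⟨_, fun s => Pi.single (e s).1 1, fun s => Pi.single (e s).2 1, fun s => T (e s).1 (e s).2,
    ?_⟩
  rw [e.sum_comp fun x => simpleTensor (Pi.single x.1 1) (Pi.single x.2 1) (T x.1 x.2)]
  ext a b c
  simp [simpleTensor, Finset.sum_apply, Fintype.sum_prod_type, Pi.single_apply]

theorem mem_closure_rankAtMost_borderRank (T : ι₁ → ι₂ → ι₃ → ℂ) :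
    T ∈ closure (rankAtMost ι₁ ι₂ ι₃ (borderRank T)) :=
  Nat.sInf_mem (s := {r | T ∈ closure (rankAtMost ι₁ ι₂ ι₃ r)}) <|
    (exists_mem_rankAtMost T).imp fun _ hr => subset_closure hr

end BorderRank

section KoszulFlattening

variable {α β γ : Type}

def koszulFlattening (p : (β → ℂ) →ₗ[ℂ] Fin 3 → ℂ) :
    (α → β → γ → ℂ) →ₗ[ℂ] Matrix (Fin 3 × γ) (Fin 3 × α) ℂ where
  toFun T := of fun r c => (Pi.single c.1 1 ⨯₃ p fun b => T c.2 b r.2) r.1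
  map_add' T T' := by
    ext r c
    have : (fun b => (T + T') c.2 b r.2) = (fun b => T c.2 b r.2) + fun b => T' c.2 b r.2 := rfl
    simp only [Matrix.add_apply, of_apply]
    rw [this, map_add, map_add]
    rfl
  map_smul' a T := by
    ext r c
    have : (fun b => (a • T) c.2 b r.2) = a • fun b => T c.2 b r.2 := rfl
    simp only [Matrix.smul_apply, of_apply]
    rw [this, map_smul, map_smul]
    rfl

theorem koszulFlattening_apply (p : (β → ℂ) →ₗ[ℂ] Fin 3 → ℂ) (T : α → β → γ → ℂ)
    (r : Fin 3 × γ) (c : Fin 3 × α) :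
    koszulFlattening p T r c = (Pi.single c.1 1 ⨯₃ p fun b => T c.2 b r.2) r.1 :=
  rfl

theorem koszulFlattening_simpleTensor (p : (β → ℂ) →ₗ[ℂ] Fin 3 → ℂ) (u : α → ℂ) (v : β → ℂ)
    (w : γ → ℂ) :
    koszulFlattening p (simpleTensor u v w) =
      of fun r c => w r.2 * LinearMap.toMatrix' (crossProduct.flip (p v)) r.1 c.1 * u c.2 := by
  ext r c
  have : (fun b => simpleTensor u v w c.2 b r.2) = (u c.2 * w r.2) • v := by
    ext b; simp only [simpleTensor, Pi.smul_apply, smul_eq_mul]; ring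
  simp only [koszulFlattening_apply, of_apply, this, map_smul, LinearMap.toMatrix'_apply,
    LinearMap.flip_apply, Pi.smul_apply, smul_eq_mul]
  ring

theorem rank_koszulFlattening_simpleTensor_le [Fintype α] [Fintype γ]
    (p : (β → ℂ) →ₗ[ℂ] Fin 3 → ℂ) (u : α → ℂ) (v : β → ℂ) (w : γ → ℂ) :
    (koszulFlattening p (simpleTensor u v w)).rank ≤ 2 := by
  rw [koszulFlattening_simpleTensor]
  exact (rank_diagonal_mul_submatrix_mul_diagonal_le _ _ _ _ _).trans
    (rank_toMatrix'_crossProduct_flip_le _)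

theorem rank_koszulFlattening_le_of_mem_rankAtMost [Fintype α] [Fintype γ]
    (p : (β → ℂ) →ₗ[ℂ] Fin 3 → ℂ) {r : ℕ} {T : α → β → γ → ℂ} (hT : T ∈ rankAtMost α β γ r) :
    (koszulFlattening p T).rank ≤ 2 * r := by
  obtain ⟨u, v, w, rfl⟩ := hT
  rw [map_sum]
  refine (rank_sum_le _ _).trans ?_
  simpa [mul_comm] using
    Finset.sum_le_sum fun s (_ : s ∈ Finset.univ) =>
      rank_koszulFlattening_simpleTensor_le p (u s) (v s) (w s)

theorem det_submatrix_koszulFlattening_eq_zero [Fintype α] [Fintype β] [Fintype γ]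
    (p : (β → ℂ) →ₗ[ℂ] Fin 3 → ℂ) {r : ℕ} {T : α → β → γ → ℂ}
    (hT : T ∈ closure (rankAtMost α β γ r))
    {ι : Type} [Fintype ι] [DecidableEq ι] (e : ι → Fin 3 × γ) (f : ι → Fin 3 × α)
    (hr : 2 * r < Fintype.card ι) : ((koszulFlattening p T).submatrix e f).det = 0 := by
  have hclosed : IsClosed {T : α → β → γ → ℂ | ((koszulFlattening p T).submatrix e f).det = 0} :=
    isClosed_eq ((continuous_id.matrix_submatrix e f).matrix_det.comp
      (koszulFlattening p).continuous_of_finiteDimensional) continuous_const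
  refine closure_minimal (fun S hS => ?_) hclosed hT
  by_contra hdet
  have := rank_of_det_ne_zero hdet
  have := (rank_submatrix_le (koszulFlattening p S) e f).trans
    (rank_koszulFlattening_le_of_mem_rankAtMost p hS)
  omega

end KoszulFlattening

theorem card_le_two_mul_borderRank_of_det_ne_zero {α β γ : Type}
    [Fintype α] [Fintype β] [Fintype γ] (p : (β → ℂ) →ₗ[ℂ] Fin 3 → ℂ) (T : α → β → γ → ℂ)
    {ι : Type} [Fintype ι] [DecidableEq ι] (e : ι → Fin 3 × γ) (f : ι → Fin 3 × α)
    (hdet : ((koszulFlattening p T).submatrix e f).det ≠ 0) :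
    Fintype.card ι ≤ 2 * borderRank T := by
  by_contra! h
  exact hdet <|
    det_submatrix_koszulFlattening_eq_zero p (mem_closure_rankAtMost_borderRank T) e f h

theorem matMulTensor_slice {n m p : ℕ} (i i' : Fin n) (j : Fin m) (k : Fin p) :
    (fun b => matMulTensor n m p (i, j) b (k, i')) = if i' = i then Pi.single (j, k) 1 else 0 := by
  ext ⟨j', k'⟩
  by_cases h : i' = i <;> simp [matMulTensor, h, Pi.single_apply, and_comm, eq_comm]

theorem TBCLRS_eq_matMulTensor {m : ℕ} {x : Fin m × Fin 2} (hx : ¬(x.1.val = 0 ∧ x.2.val = 0)) :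
    TBCLRS m x = matMulTensor m 2 2 x := by
  ext y z
  simp only [TBCLRS, if_neg hx, zero_mul, sub_zero]

namespace BCLRS

def addIndex (jk : Fin 2 × Fin 2) : Fin 3 := ⟨jk.1 + jk.2, by omega⟩

def projection : (Fin 2 × Fin 2 → ℂ) →ₗ[ℂ] Fin 3 → ℂ :=
  (of fun c jk => if addIndex jk = c then 1 else 0 : Matrix (Fin 3) (Fin 2 × Fin 2) ℂ).mulVecLin

theorem projection_single (jk : Fin 2 × Fin 2) :
    projection (Pi.single jk 1) = Pi.single (addIndex jk) 1 := by
  ext c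
  simp [projection, Pi.single_apply, eq_comm]

-- the Koszul flattening of `M⟨1,2,2⟩`
def koszulBlock : Matrix (Fin 3 × Fin 2) (Fin 3 × Fin 2) ℂ :=
  of fun r c => (Pi.single c.1 1 ⨯₃ Pi.single (addIndex (c.2, r.2)) 1) r.1

theorem det_koszulBlock_ne_zero : koszulBlock.det ≠ 0 := by
  rw [Ne, ← exists_mulVec_eq_zero_iff]
  rintro ⟨x, hx0, hx⟩
  have h : (x (2, 1) = 0 ∧ x (1, 1) - x (2, 0) = 0) ∧ (x (2, 0) = 0 ∧ x (0, 1) = 0) ∧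
      x (0, 1) - x (1, 0) = 0 ∧ x (0, 0) = 0 := by
    simpa [koszulBlock, mulVec, dotProduct, Fintype.sum_prod_type, Fin.sum_univ_succ, cross_apply,
      addIndex, Pi.single_apply, Fin.forall_fin_succ, ← sub_eq_add_neg] using
      fun s k => congrFun hx (s, k)
  refine hx0 (funext fun ⟨t, j⟩ => ?_)
  fin_cases t <;> fin_cases j <;> simp <;> grind

theorem koszulFlattening_matMulTensor_apply {m : ℕ} (s t : Fin 3) (k j : Fin 2) (i i' : Fin m) :
    koszulFlattening projection (matMulTensor m 2 2) (s, (k, i')) (t, (i, j)) =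
      if i' = i then koszulBlock (s, k) (t, j) else 0 := by
  rw [koszulFlattening_apply, matMulTensor_slice]
  split_ifs <;> simp [projection_single, koszulBlock]

theorem koszulFlattening_TBCLRS_apply {m : ℕ} (s t : Fin 3) (k j : Fin 2) (i i' : Fin m)
    (h : ¬(i.val = 0 ∧ j.val = 0)) :
    koszulFlattening projection (TBCLRS m) (s, (k, i')) (t, (i, j)) =
      if i' = i then koszulBlock (s, k) (t, j) else 0 := by
  rw [← koszulFlattening_matMulTensor_apply, koszulFlattening_apply, koszulFlattening_apply,
    TBCLRS_eq_matMulTensor h]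

abbrev MinorIndex (n : ℕ) : Type := Unit ⊕ ((Fin 3 × Fin 2) × Fin (n + 2))

def minorRow (n : ℕ) : MinorIndex n → Fin 3 × Fin 2 × Fin (n + 3)
  | .inl _ => (2, 0, 0)
  | .inr ((s, k), a) => (s, k, a.succ)

def minorCol (n : ℕ) : MinorIndex n → Fin 3 × Fin (n + 3) × Fin 2
  | .inl _ => (0, 0, 1)
  | .inr ((t, j), a) => (t, a.succ, j)

theorem det_minor_ne_zero (n : ℕ) :
    ((koszulFlattening projection (TBCLRS (n + 3))).submatrix (minorRow n) (minorCol n)).det ≠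
      0 := by
  set M := (koszulFlattening projection (TBCLRS (n + 3))).submatrix (minorRow n) (minorCol n)
  have h₂₁ : M.toBlocks₂₁ = 0 := by
    ext ⟨⟨s, k⟩, a⟩ _
    simp [M, toBlocks₂₁, minorRow, minorCol, koszulFlattening_TBCLRS_apply, Fin.succ_ne_zero]
  have h₁₁ : M.toBlocks₁₁.det = 1 := by
    simp [M, toBlocks₁₁, minorRow, minorCol, koszulFlattening_TBCLRS_apply, koszulBlock, addIndex,
      cross_apply]
  have h₂₂ : M.toBlocks₂₂ = blockDiagonal fun _ => koszulBlock := by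
    ext ⟨⟨s, k⟩, a⟩ ⟨⟨t, j⟩, a'⟩
    simp [M, toBlocks₂₂, minorRow, minorCol, koszulFlattening_TBCLRS_apply, blockDiagonal_apply,
      eq_comm]
  rw [← fromBlocks_toBlocks M, h₂₁, det_fromBlocks_zero₂₁, h₁₁, h₂₂, det_blockDiagonal]
  simp [det_koszulBlock_ne_zero]

end BCLRS

theorem borderRank_TBCLRS_lower_bound (m : ℕ) (hm : 2 < m) :
    3 * m - 2 ≤ borderRank (TBCLRS m) := by
  obtain ⟨n, rfl⟩ : ∃ n, m = n + 3 := ⟨m - 3, by omega⟩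
  have := card_le_two_mul_borderRank_of_det_ne_zero BCLRS.projection (TBCLRS (n + 3)) _ _
    (BCLRS.det_minor_ne_zero n)
  simp only [Fintype.card_sum, Fintype.card_prod, Fintype.card_unit, Fintype.card_fin] at this
  omega
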